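/- arXiv:math/0612803 — 7 statements merged into one kernel-verified Lean document; each statement's English description precedes it below -/
import Mathlib

section
/- For every C² embedding α : [a,b] → ℝⁿ and every ε > 0, there exists a polynomial map β : [a,b] → ℝⁿ (each component a real polynomial) that is injective with nonvanishing derivative on [a,b] and satisfies |α(t) - β(t)| < ε and |α'(t) - β'(t)| < ε for all t ∈ [a,b]. -/
/-!
Approximate `α'` uniformly by polynomials (Weierstrass) and integrate, fixing the value at `a`:
the resulting polynomial curve `β` is `C¹`-close to `α`. An embedding of a compact interval
expands distances linearly, `κ |s - t| ≤ ‖α s - α t‖`: near the diagonal because `α'` is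
uniformly continuous and bounded away from `0`, away from it by compactness and injectivity.
If `‖α' - β'‖ ≤ δ < κ`, then `α - β` is `δ`-Lipschitz, so `β` still expands distances and is
injective.
-/

open Set Polynomial

theorem Polynomial.exists_derivative_eq_and_eval_eq {K : Type*} [Field K] [CharZero K]
    (q : K[X]) (a v : K) : ∃ p : K[X], derivative p = q ∧ p.eval a = v := by
  obtain ⟨p, hp⟩ : ∃ p : K[X], derivative p = q := by
    induction q using Polynomial.induction_on' with
    | add q r hq hr =>
      obtain ⟨p, rfl⟩ := hq
      obtain ⟨p', rfl⟩ := hr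
      exact ⟨p + p', derivative_add⟩
    | monomial k c =>
      refine ⟨monomial (k + 1) (c / (k + 1)), ?_⟩
      rw [derivative_monomial, Nat.add_sub_cancel, Nat.cast_succ,
        div_mul_cancel₀ _ (Nat.cast_add_one_ne_zero k)]
  exact ⟨p + C (v - p.eval a), by simp [hp], by simp⟩

section PolynomialCurve

variable {ι : Type*} [Fintype ι]

noncomputable def polynomialCurve (P : ι → ℝ[X]) (t : ℝ) : EuclideanSpace ℝ ι :=
  WithLp.toLp 2 fun i => (P i).eval t

theorem hasDerivAt_polynomialCurve (P : ι → ℝ[X]) (t : ℝ) :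
    HasDerivAt (polynomialCurve P) (polynomialCurve (fun i => derivative (P i)) t) t := by
  have h : HasDerivAt (fun t i => (P i).eval t) (fun i => (derivative (P i)).eval t) t :=
    hasDerivAt_pi.2 fun i => (P i).hasDerivAt t
  exact (EuclideanSpace.equiv ι ℝ).symm.hasFDerivAt.comp_hasDerivAt t h

theorem EuclideanSpace.norm_le_sqrt_card_mul (v : EuclideanSpace ℝ ι) {r : ℝ} (hr : 0 ≤ r)
    (h : ∀ i, |v i| ≤ r) : ‖v‖ ≤ √(Fintype.card ι) * r := by
  rw [EuclideanSpace.norm_eq, ← Real.sqrt_sq hr, ← Real.sqrt_mul (Nat.cast_nonneg _)]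
  gcongr
  calc ∑ i, ‖v i‖ ^ 2 ≤ ∑ _i : ι, r ^ 2 :=
        Finset.sum_le_sum fun i _ => pow_le_pow_left₀ (norm_nonneg _) (h i) 2
    _ = Fintype.card ι * r ^ 2 := by simp

theorem exists_polynomialCurve_near {f : ℝ → EuclideanSpace ℝ ι} {a b : ℝ}
    (hf : ContinuousOn f (Icc a b)) {δ : ℝ} (hδ : 0 < δ) :
    ∃ Q : ι → ℝ[X], ∀ t ∈ Icc a b, ‖f t - polynomialCurve Q t‖ < δ := by
  set N := √(Fintype.card ι)
  have hr : 0 < δ / (N + 1) := by positivity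
  have hcomp (i : ι) : ContinuousOn (fun t => f t i) (Icc a b) :=
    (EuclideanSpace.proj i).continuous.comp_continuousOn hf
  choose Q hQ using fun i => exists_polynomial_near_of_continuousOn a b _ (hcomp i) _ hr
  refine ⟨Q, fun t ht => ?_⟩
  calc ‖f t - polynomialCurve Q t‖ ≤ N * (δ / (N + 1)) :=
        EuclideanSpace.norm_le_sqrt_card_mul _ hr.le fun i => by
          rw [PiLp.sub_apply, abs_sub_comm]
          exact (hQ i t ht).le
    _ < δ := by
      rw [mul_div_assoc', div_lt_iff₀ (by positivity)]
      nlinarith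

theorem exists_polynomialCurve_contDiff_one_near {α : ℝ → EuclideanSpace ℝ ι}
    (hα : ContDiff ℝ 1 α) {a b : ℝ} (hab : a ≤ b) {δ : ℝ} (hδ : 0 < δ) :
    ∃ P : ι → ℝ[X], ∀ t ∈ Icc a b,
      ‖α t - polynomialCurve P t‖ < δ ∧ ‖deriv α t - deriv (polynomialCurve P) t‖ < δ := by
  have hL : 0 < b - a + 1 := by linarith
  obtain ⟨Q, hQ⟩ :=
    exists_polynomialCurve_near (hα.continuous_deriv le_rfl).continuousOn (div_pos hδ hL)
  choose P hPQ hPa using fun i => (Q i).exists_derivative_eq_and_eval_eq a (α a i)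
  have hderiv (t : ℝ) : HasDerivAt (polynomialCurve P) (polynomialCurve Q t) t := by
    simpa only [hPQ] using hasDerivAt_polynomialCurve P t
  have hβa : polynomialCurve P a = α a := by
    ext i
    exact hPa i
  refine ⟨P, fun t ht => ⟨?_, ?_⟩⟩
  · have hmvt := (convex_Icc a b).norm_image_sub_le_of_norm_hasDerivWithin_le
      (f := fun u => α u - polynomialCurve P u)
      (fun x _ => ((hα.differentiable one_ne_zero x).hasDerivAt.sub (hderiv x)).hasDerivWithinAt)
      (fun x hx => (hQ x hx).le) ⟨le_rfl, hab⟩ ht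
    rw [hβa, sub_self, sub_zero, Real.norm_eq_abs, abs_of_nonneg (sub_nonneg.2 ht.1)] at hmvt
    calc ‖α t - polynomialCurve P t‖ ≤ δ / (b - a + 1) * (t - a) := hmvt
      _ < δ / (b - a + 1) * (b - a + 1) := by gcongr; linarith [ht.2]
      _ = δ := div_mul_cancel₀ _ hL.ne'
  · rw [(hderiv t).deriv]
    exact (hQ t ht).trans_le (div_le_self hδ.le (by linarith))

end PolynomialCurve

theorem IsCompact.exists_pos_le_dist_image_of_injOn {X Y : Type*} [PseudoMetricSpace X]
    [MetricSpace Y] {S : Set X} (hS : IsCompact S) {f : X → Y} (hf : ContinuousOn f S)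
    (hinj : InjOn f S) {η : ℝ} (hη : 0 < η) :
    ∃ c > 0, ∀ x ∈ S, ∀ y ∈ S, η ≤ dist x y → c ≤ dist (f x) (f y) := by
  set K := S ×ˢ S ∩ {p : X × X | η ≤ dist p.1 p.2}
  have hK : IsCompact K :=
    (hS.prod hS).inter_right (isClosed_le continuous_const continuous_dist)
  have hf₁ : ContinuousOn (fun p : X × X => f p.1) K :=
    hf.comp continuousOn_fst fun p hp => hp.1.1
  have hf₂ : ContinuousOn (fun p : X × X => f p.2) K :=
    hf.comp continuousOn_snd fun p hp => hp.1.2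
  have hpos : ∀ p ∈ K, 0 < dist (f p.1) (f p.2) := fun p hp => dist_pos.2 fun h => by
    have hηp : η ≤ dist p.1 p.2 := hp.2
    rw [hinj hp.1.1 hp.1.2 h, dist_self] at hηp
    linarith
  obtain ⟨c, hc, hcK⟩ :=
    hK.exists_forall_le' (continuous_dist.comp_continuousOn (hf₁.prodMk hf₂)) hpos
  exact ⟨c, hc, fun x hx y hy hxy => hcK (x, y) ⟨⟨hx, hy⟩, hxy⟩⟩

section Stability

variable {E : Type*} [NormedAddCommGroup E] [NormedSpace ℝ E] {α : ℝ → E} {a b : ℝ}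

theorem norm_sub_sub_smul_deriv_le (hα : Differentiable ℝ α) {s t r : ℝ}
    (h : ∀ x ∈ uIcc t s, ‖deriv α x - deriv α t‖ ≤ r) :
    ‖α s - α t - (s - t) • deriv α t‖ ≤ r * |s - t| := by
  have hg : ∀ x ∈ uIcc t s, HasDerivWithinAt (fun u => α u - u • deriv α t)
      (deriv α x - deriv α t) (uIcc t s) x := fun x _ => by
    have hlin : HasDerivAt (fun u : ℝ => u • deriv α t) (deriv α t) x := by
      simpa using (hasDerivAt_id' x).smul_const (deriv α t)
    exact ((hα x).hasDerivAt.sub hlin).hasDerivWithinAt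
  have := (convex_uIcc t s).norm_image_sub_le_of_norm_hasDerivWithin_le hg h left_mem_uIcc
    right_mem_uIcc
  rw [Real.norm_eq_abs] at this
  convert this using 2
  rw [sub_smul]
  abel

theorem exists_pos_mul_abs_sub_le_norm_sub_of_abs_sub_lt (hα : ContDiff ℝ 1 α) {m : ℝ}
    (hm : 0 < m) (hmα : ∀ t ∈ Icc a b, m ≤ ‖deriv α t‖) :
    ∃ η > 0, ∀ s ∈ Icc a b, ∀ t ∈ Icc a b, |s - t| < η → m / 2 * |s - t| ≤ ‖α s - α t‖ := by
  obtain ⟨η, hη, hclose⟩ := Metric.uniformContinuousOn_iff.1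
    (isCompact_Icc.uniformContinuousOn_of_continuous (hα.continuous_deriv le_rfl).continuousOn)
    (m / 2) (half_pos hm)
  refine ⟨η, hη, fun s hs t ht hst => ?_⟩
  have hseg : ∀ x ∈ uIcc t s, ‖deriv α x - deriv α t‖ ≤ m / 2 := fun x hx => by
    rw [← dist_eq_norm]
    refine (hclose x (uIcc_subset_Icc ht hs hx) t ht ?_).le
    rw [Real.dist_eq]
    exact (abs_sub_left_of_mem_uIcc hx).trans_lt hst
  have haffine := norm_sub_sub_smul_deriv_le (hα.differentiable one_ne_zero) hseg
  have hspeed : m * |s - t| ≤ ‖(s - t) • deriv α t‖ := by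
    rw [norm_smul, Real.norm_eq_abs, mul_comm]
    exact mul_le_mul_of_nonneg_left (hmα t ht) (abs_nonneg _)
  linarith [norm_le_norm_add_norm_sub (α s - α t) ((s - t) • deriv α t)]

theorem exists_pos_mul_abs_sub_le_norm_sub (hα : ContDiff ℝ 1 α) (hinj : InjOn α (Icc a b))
    {m : ℝ} (hm : 0 < m) (hmα : ∀ t ∈ Icc a b, m ≤ ‖deriv α t‖) :
    ∃ κ > 0, ∀ s ∈ Icc a b, ∀ t ∈ Icc a b, κ * |s - t| ≤ ‖α s - α t‖ := by
  obtain ⟨η, hη, hnear⟩ := exists_pos_mul_abs_sub_le_norm_sub_of_abs_sub_lt hα hm hmα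
  obtain ⟨c, hc, hfar⟩ :=
    isCompact_Icc.exists_pos_le_dist_image_of_injOn hα.continuous.continuousOn hinj hη
  have hD : 0 < max η (b - a) := lt_max_of_lt_left hη
  refine ⟨min (m / 2) (c / max η (b - a)), lt_min (half_pos hm) (div_pos hc hD),
    fun s hs t ht => ?_⟩
  rcases lt_or_ge |s - t| η with hst | hst
  · exact (mul_le_mul_of_nonneg_right (min_le_left _ _) (abs_nonneg _)).trans
      (hnear s hs t ht hst)
  · have hst_le : |s - t| ≤ max η (b - a) := le_max_of_le_right
      (abs_sub_le_iff.2 ⟨by linarith [hs.2, ht.1], by linarith [hs.1, ht.2]⟩)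
    calc min (m / 2) (c / max η (b - a)) * |s - t| ≤ c / max η (b - a) * max η (b - a) :=
          mul_le_mul (min_le_right _ _) hst_le (abs_nonneg _) (div_pos hc hD).le
      _ = c := div_mul_cancel₀ _ hD.ne'
      _ ≤ ‖α s - α t‖ := by
        rw [← dist_eq_norm]
        exact hfar s hs t ht (by rwa [Real.dist_eq])

theorem exists_pos_injOn_of_norm_deriv_sub_lt (hα : ContDiff ℝ 1 α)
    (hinj : InjOn α (Icc a b)) (hα' : ∀ t ∈ Icc a b, deriv α t ≠ 0) :
    ∃ δ > 0, ∀ β : ℝ → E, Differentiable ℝ β → (∀ t ∈ Icc a b, ‖deriv α t - deriv β t‖ < δ) →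
      InjOn β (Icc a b) ∧ ∀ t ∈ Icc a b, deriv β t ≠ 0 := by
  obtain ⟨m, hm, hmα⟩ := isCompact_Icc.exists_forall_le'
    (hα.continuous_deriv le_rfl).norm.continuousOn fun t ht => norm_pos_iff.2 (hα' t ht)
  obtain ⟨κ, hκ, hκα⟩ := exists_pos_mul_abs_sub_le_norm_sub hα hinj hm hmα
  obtain ⟨δ, hδ, hδκ, hδm⟩ : ∃ δ > 0, δ < κ ∧ δ < m :=
    ⟨min κ m / 2, by positivity, by linarith [min_le_left κ m, lt_min hκ hm],
      by linarith [min_le_right κ m, lt_min hκ hm]⟩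
  refine ⟨δ, hδ, fun β hβ hαβ => ⟨fun s hs t ht hst => ?_, fun t ht h0 => ?_⟩⟩
  · have hmvt := (convex_Icc a b).norm_image_sub_le_of_norm_hasDerivWithin_le
      (f := fun u => α u - β u)
      (fun x _ => ((hα.differentiable one_ne_zero x).hasDerivAt.sub
        (hβ x).hasDerivAt).hasDerivWithinAt)
      (fun x hx => (hαβ x hx).le) ht hs
    rw [hst, sub_sub_sub_cancel_right, Real.norm_eq_abs] at hmvt
    by_contra hne
    have hpos : 0 < |s - t| := abs_pos.2 (sub_ne_zero.2 hne)
    nlinarith [hκα s hs t ht]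
  · have hclose := hαβ t ht
    rw [h0, sub_zero] at hclose
    linarith [hmα t ht]

end Stability

theorem stmt_5 (n : ℕ) (a b : ℝ) (hab : a ≤ b)
    (α : ℝ → EuclideanSpace ℝ (Fin n))
    (hα : ContDiff ℝ 2 α)
    (hαinj : InjOn α (Icc a b))
    (hα' : ∀ t ∈ Icc a b, deriv α t ≠ 0)
    (ε : ℝ) (hε : 0 < ε) :
    ∃ (P : Fin n → Polynomial ℝ) (β : ℝ → EuclideanSpace ℝ (Fin n)),
      (∀ t, β t = fun i => (P i).eval t) ∧
      InjOn β (Icc a b) ∧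
      (∀ t ∈ Icc a b, deriv β t ≠ 0) ∧
      (∀ t ∈ Icc a b, ‖α t - β t‖ < ε ∧ ‖deriv α t - deriv β t‖ < ε) := by
  have hα₁ : ContDiff ℝ 1 α := hα.of_le one_le_two
  obtain ⟨δ, hδ, hstable⟩ := exists_pos_injOn_of_norm_deriv_sub_lt hα₁ hαinj hα'
  obtain ⟨P, hP⟩ := exists_polynomialCurve_contDiff_one_near hα₁ hab (lt_min hδ hε)
  obtain ⟨hinj, hderiv⟩ := hstable (polynomialCurve P)
    (fun t => (hasDerivAt_polynomialCurve P t).differentiableAt)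
    (fun t ht => (hP t ht).2.trans_le (min_le_left _ _))
  exact ⟨P, polynomialCurve P, fun t => rfl, hinj, hderiv, fun t ht =>
    ⟨(hP t ht).1.trans_le (min_le_right _ _), (hP t ht).2.trans_le (min_le_right _ _)⟩⟩
end

section
/- Let κ : ℝ → ℝⁿ be a polynomial map of degree d ≥ 1, say κ(t) = a_d t^d + ··· + a_1 t + a_0 with a_d ≠ 0. Then the cosine of the angle between κ(t) and κ'(t), namely (κ(t)·κ'(t))/(|κ(t)||κ'(t)|), tends to 1 as t → +∞ and to -1 as t → -∞. -/
/-!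
Write `κ(t) = t^d u(t)` and `κ'(t) = t^(d-1) v(t)`. Both `u(t)` and `v(t)` tend to nonzero
multiples of the same vector `a_d` as `|t| → ∞`, so the angle between them tends to `0`.
Rescaling the two vectors by `t^d` and `t^(d-1)` multiplies the cosine by the sign of
`t^(2d-1)`, which is the sign of `t`.
-/

open Filter Topology Bornology Finset Asymptotics InnerProductGeometry RealInnerProductSpace

theorem div_abs_eq_sign {α : Type*} [Field α] [LinearOrder α] [IsStrictOrderedRing α] (r : α) :
    r / |r| = SignType.sign r := by
  rcases eq_or_ne r 0 with rfl | hr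
  · simp
  · rw [div_eq_iff (abs_ne_zero.2 hr), sign_mul_abs]

section PolynomialCurve

variable {𝕜 E : Type*} [NontriviallyNormedField 𝕜] [NormedAddCommGroup E] [NormedSpace 𝕜 E]

theorem hasDerivAt_sum_range_pow_smul (b : ℕ → E) (m : ℕ) (t : 𝕜) :
    HasDerivAt (fun t => ∑ i ∈ range (m + 1), t ^ i • b i)
      (∑ i ∈ range m, t ^ i • ((i + 1 : 𝕜) • b (i + 1))) t := by
  convert HasDerivAt.fun_sum fun i _ => (hasDerivAt_pow i t).smul_const (b i) using 1
  rw [sum_range_succ']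
  simp [smul_smul, mul_comm]

theorem tendsto_inv_pow_smul_sum_range_pow_smul (b : ℕ → E) (m : ℕ) :
    Tendsto (fun t : 𝕜 => (t ^ m)⁻¹ • ∑ i ∈ range (m + 1), t ^ i • b i) (cobounded 𝕜)
      (𝓝 (b m)) := by
  have hlow : (fun t : 𝕜 => ∑ i ∈ range m, t ^ i • b i) =o[cobounded 𝕜] (· ^ m) :=
    IsLittleO.fun_sum fun i hi => isLittleO_norm_left.mp <| by
      simpa only [norm_smul, mul_comm] using
        (isLittleO_pow_pow_cobounded_of_lt (R := 𝕜) (mem_range.mp hi)).norm_left.const_mul_left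
          ‖b i‖
  have hlim := hlow.tendsto_inv_smul_nhds_zero.add_const (b m)
  rw [zero_add] at hlim
  refine hlim.congr' ?_
  filter_upwards [eventually_ne_cobounded 0] with t ht
  rw [sum_range_succ, smul_add, inv_smul_smul₀ (pow_ne_zero m ht)]

end PolynomialCurve

section Angle

variable {E : Type*} [NormedAddCommGroup E] [InnerProductSpace ℝ E]

theorem cos_angle_smul_smul (r s : ℝ) (x y : E) :
    Real.cos (angle (r • x) (s • y)) = SignType.sign (r * s) * Real.cos (angle x y) := by
  simp only [cos_angle, real_inner_smul_left, real_inner_smul_right, norm_smul, Real.norm_eq_abs]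
  rw [← div_abs_eq_sign, abs_mul]
  ring

theorem Filter.Tendsto.cos_angle {α : Type*} {l : Filter α} {u v : α → E} {x y : E}
    (hu : Tendsto u l (𝓝 x)) (hv : Tendsto v l (𝓝 y)) (hx : x ≠ 0) (hy : y ≠ 0) :
    Tendsto (fun t => Real.cos (angle (u t) (v t))) l (𝓝 (Real.cos (angle x y))) := by
  have hangle : Tendsto (fun t => angle (u t) (v t)) l (𝓝 (angle x y)) :=
    Tendsto.comp (f := fun t => (u t, v t)) (g := fun p : E × E => angle p.1 p.2)
      (continuousAt_angle (x := (x, y)) hx hy) (hu.prodMk_nhds hv)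
  exact (Real.continuous_cos.tendsto _).comp hangle

theorem tendsto_sign_mul_cos_angle_deriv_sum_range_pow_smul (a : ℕ → E) (m : ℕ)
    (ha : a (m + 1) ≠ 0) (κ : ℝ → E) (hκ : ∀ t, κ t = ∑ i ∈ range (m + 1 + 1), t ^ i • a i) :
    Tendsto (fun t => SignType.sign t * Real.cos (angle (κ t) (deriv κ t))) (cobounded ℝ)
      (𝓝 1) := by
  set b : ℕ → E := fun i => (i + 1 : ℝ) • a (i + 1)
  have hderiv : ∀ t, deriv κ t = ∑ i ∈ range (m + 1), t ^ i • b i := fun t => by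
    rw [funext hκ]
    exact (hasDerivAt_sum_range_pow_smul a (m + 1) t).deriv
  have hu : Tendsto (fun t : ℝ => (t ^ (m + 1))⁻¹ • κ t) (cobounded ℝ) (𝓝 (a (m + 1))) := by
    simpa only [hκ] using tendsto_inv_pow_smul_sum_range_pow_smul a (m + 1)
  have hv : Tendsto (fun t : ℝ => (t ^ m)⁻¹ • deriv κ t) (cobounded ℝ) (𝓝 (b m)) := by
    simpa only [hderiv] using tendsto_inv_pow_smul_sum_range_pow_smul b m
  have hb : b m ≠ 0 := smul_ne_zero (by positivity) ha
  have hlim := hu.cos_angle hv ha hb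
  rw [angle_smul_right_of_pos _ _ (by positivity), angle_self ha, Real.cos_zero] at hlim
  refine hlim.congr' ?_
  filter_upwards [eventually_ne_cobounded 0] with t ht
  have hscale := cos_angle_smul_smul (t ^ (m + 1)) (t ^ m) ((t ^ (m + 1))⁻¹ • κ t)
    ((t ^ m)⁻¹ • deriv κ t)
  rw [smul_inv_smul₀ (pow_ne_zero _ ht), smul_inv_smul₀ (pow_ne_zero _ ht)] at hscale
  rw [hscale, ← mul_assoc, ← SignType.coe_mul, ← sign_mul,
    show t * (t ^ (m + 1) * t ^ m) = (t ^ (m + 1)) ^ 2 by ring,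
    sign_pos (by positivity), SignType.coe_one, one_mul]

end Angle

theorem stmt_6 (n d : ℕ) (hd : 1 ≤ d)
    (a : ℕ → EuclideanSpace ℝ (Fin n)) (had : a d ≠ 0)
    (κ : ℝ → EuclideanSpace ℝ (Fin n))
    (hκ : ∀ t, κ t = ∑ i ∈ Finset.range (d + 1), t ^ i • a i) :
    Tendsto (fun t => ⟪κ t, deriv κ t⟫ / (‖κ t‖ * ‖deriv κ t‖)) atTop (nhds 1) ∧
    Tendsto (fun t => ⟪κ t, deriv κ t⟫ / (‖κ t‖ * ‖deriv κ t‖)) atBot (nhds (-1)) := by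
  obtain ⟨m, rfl⟩ : ∃ m, d = m + 1 := ⟨d - 1, by omega⟩
  have hlim := tendsto_sign_mul_cos_angle_deriv_sum_range_pow_smul a m had κ hκ
  simp only [← cos_angle]
  constructor
  · refine (hlim.mono_left IsOrderBornology.atTop_le_cobounded).congr' ?_
    filter_upwards [eventually_gt_atTop 0] with t ht
    rw [sign_pos ht, SignType.coe_one, one_mul]
  · refine (hlim.mono_left IsOrderBornology.atBot_le_cobounded).neg.congr' ?_
    filter_upwards [eventually_lt_atBot 0] with t ht
    rw [sign_neg ht, SignType.coe_neg, SignType.coe_one, neg_one_mul, neg_neg]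
end

section
/- Let x(t) and y(t) be real polynomials of degrees d_x and d_y respectively, with (x'(t), y'(t)) ≠ (0,0) for all t, and assume all self-intersections of the plane curve t ↦ (x(t), y(t)) are transverse double points. Then the number of double points is at most (1/2)(d_x - 1)(d_y - 1). -/
/-!
Write `x(X₀) - x(X₁) = (X₀ - X₁) Δx` and likewise for `y`. The parameter pairs `(r, s)`, `r ≠ s`,
of double points are common zeros of the divided differences `Δx` and `Δy`, of total degrees at
most `d_x - 1` and `d_y - 1`. Split off their greatest common factor: `Δx = G P`, `Δy = G Q`. Since
`G` divides `x(X₀) - x(X₁)` and `y(X₀) - y(X₁)`, it divides their Jacobian, which at `(r, s)` is, up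
to sign, the transversality determinant `x'(r) y'(s) - x'(s) y'(r) ≠ 0`. Hence `G(r, s) ≠ 0`, and
`(r, s)` is a common zero of the coprime `P` and `Q`. A weak affine Bézout bound allows at most
`(d_x - 1)(d_y - 1)` of them, and every double point comes from the two pairs `(r, s)` and `(s, r)`.

Bézout: let `T` be `N` common zeros of coprime `P`, `Q` of degrees `m`, `n`, and `V_k` the
polynomials of degree `≤ k`, of dimension `h(k) = (k+1)(k+2)/2`. Evaluation maps `V_{m+n+N}` onto
`K^T` and kills `P V_{n+N} + Q V_{m+N}`, of dimension `h(n+N) + h(m+N) - h(N)` because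
`P V_{n+N} ∩ Q V_{m+N} = PQ V_N`. Comparing dimensions gives exactly `N ≤ mn`.
-/

open Module

lemma Set.finite_and_ncard_le_of_forall_finset_card_le {α : Type*} {S : Set α} {B : ℕ}
    (h : ∀ T : Finset α, ↑T ⊆ S → T.card ≤ B) : S.Finite ∧ S.ncard ≤ B := by
  have hS : S.Finite := by
    by_contra hinf
    obtain ⟨T, hTS, hT⟩ := Set.Infinite.exists_subset_card_eq hinf (B + 1)
    have := h T hTS
    omega
  obtain ⟨T, rfl⟩ := hS.exists_finset_coe
  exact ⟨hS, by simpa using h T le_rfl⟩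

lemma Set.two_mul_ncard_image_le {α β : Type*} {f : α → β} {S : Set α} (hS : S.Finite)
    (h : ∀ a ∈ S, ∃ b ∈ S, b ≠ a ∧ f b = f a) : 2 * (f '' S).ncard ≤ S.ncard := by
  classical
  obtain ⟨s, rfl⟩ := hS.exists_finset_coe
  rw [← Finset.coe_image, Set.ncard_coe_finset, Set.ncard_coe_finset]
  refine Finset.mul_card_image_le_card s 2 fun c hc => ?_
  obtain ⟨a, ha, rfl⟩ := Finset.mem_image.mp hc
  obtain ⟨b, hb, hba, hfb⟩ := h a ha
  exact Finset.one_lt_card.mpr ⟨b, by simpa [hfb] using hb, a, by simp [ha], hba⟩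

section

open Finset

lemma two_mul_sum_range_add_one (d : ℕ) :
    2 * ∑ j ∈ range (d + 1), (j + 1) = (d + 1) * (d + 2) := by
  induction d with
  | zero => simp
  | succ d ih => rw [sum_range_succ, mul_add, ih]; ring

lemma two_mul_card_add_le (d : ℕ) :
    2 * Nat.card {p : ℕ × ℕ // p.1 + p.2 ≤ d} = (d + 1) * (d + 2) := by
  have hmem : ∀ p : ℕ × ℕ, p ∈ (range (d + 1)).biUnion antidiagonal ↔ p.1 + p.2 ≤ d := by
    simp
  rw [← Nat.card_congr (Equiv.subtypeEquivRight hmem), Nat.card_eq_finsetCard, card_biUnion,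
    ← two_mul_sum_range_add_one]
  · simp
  · intro i _ j _ hij
    exact disjoint_left.mpr fun p hi hj =>
      hij ((mem_antidiagonal.mp hi).symm.trans (mem_antidiagonal.mp hj))

end

lemma Submodule.finrank_map_add_finrank_le {K M N : Type*} [Field K] [AddCommGroup M]
    [Module K M] [AddCommGroup N] [Module K N] {U W : Submodule K M} [FiniteDimensional K U]
    (f : M →ₗ[K] N) (hWU : W ≤ U) (hW : W ≤ LinearMap.ker f) :
    finrank K (U.map f) + finrank K W ≤ finrank K U := by
  have hrank := (f.domRestrict U).finrank_range_add_finrank_ker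
  rw [LinearMap.range_domRestrict, LinearMap.ker_domRestrict] at hrank
  rw [← (Submodule.comapSubtypeEquivOfLe hWU).finrank_eq]
  have := Submodule.finrank_mono (Submodule.comap_mono (f := U.subtype) hW)
  omega

namespace MvPolynomial

variable {σ K : Type*} [Field K]

lemma exists_totalDegree_le_one_eval_eq_one_eval_eq_zero {q r : σ → K} (h : q ≠ r) :
    ∃ ℓ : MvPolynomial σ K, ℓ.totalDegree ≤ 1 ∧ eval q ℓ = 1 ∧ eval r ℓ = 0 := by
  obtain ⟨i, hi⟩ := Function.ne_iff.mp h
  refine ⟨C (q i - r i)⁻¹ * (X i - C (r i)), ?_, ?_, by simp⟩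
  · calc _ ≤ (C (q i - r i)⁻¹ : MvPolynomial σ K).totalDegree + (X i - C (r i)).totalDegree :=
          totalDegree_mul _ _
      _ ≤ 0 + 1 := add_le_add (totalDegree_C _).le
          ((totalDegree_sub_C_le _ _).trans (totalDegree_X i).le)
      _ = 1 := zero_add 1
  · simp [inv_mul_cancel₀ (sub_ne_zero.mpr hi)]

lemma exists_lagrange_basis (T : Finset (σ → K)) {q : σ → K} (hq : q ∈ T) :
    ∃ f : MvPolynomial σ K, f.totalDegree ≤ T.card - 1 ∧ eval q f = 1 ∧
      ∀ r ∈ T, r ≠ q → eval r f = 0 := by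
  classical
  choose! ℓ hdeg hq1 hr0 using fun r (hr : r ≠ q) =>
    exists_totalDegree_le_one_eval_eq_one_eval_eq_zero (Ne.symm hr)
  refine ⟨∏ r ∈ T.erase q, ℓ r, ?_, ?_, fun r hr hrq => ?_⟩
  · calc (∏ r ∈ T.erase q, ℓ r).totalDegree ≤ ∑ r ∈ T.erase q, (ℓ r).totalDegree :=
          totalDegree_finsetProd _ _
      _ ≤ ∑ _r ∈ T.erase q, 1 := Finset.sum_le_sum fun r hr => hdeg r (Finset.ne_of_mem_erase hr)
      _ = T.card - 1 := by simp [Finset.card_erase_of_mem hq]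
  · simp only [map_prod]
    exact Finset.prod_eq_one fun r hr => hq1 r (Finset.ne_of_mem_erase hr)
  · simp only [map_prod]
    exact Finset.prod_eq_zero (Finset.mem_erase.mpr ⟨hrq, hr⟩) (hr0 r hrq)

noncomputable def evalOn (T : Finset (σ → K)) : MvPolynomial σ K →ₗ[K] T → K :=
  LinearMap.pi fun q => (aeval (q : σ → K)).toLinearMap

@[simp]
lemma evalOn_apply (T : Finset (σ → K)) (f : MvPolynomial σ K) (q : T) :
    evalOn T f q = eval (q : σ → K) f := by
  simp [evalOn]

lemma map_evalOn_restrictTotalDegree {T : Finset (σ → K)} {d : ℕ} (hd : T.card ≤ d + 1) :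
    (restrictTotalDegree σ K d).map (evalOn T) = ⊤ := by
  classical
  choose f hdeg hq1 hr0 using fun q : T => exists_lagrange_basis T q.2
  refine eq_top_iff.mpr fun v _ => ⟨∑ q, v q • f q, ?_, ?_⟩
  · rw [SetLike.mem_coe, mem_restrictTotalDegree]
    refine (totalDegree_finsetSum _ _).trans (Finset.sup_le fun q _ => ?_)
    exact (totalDegree_smul_le _ _).trans ((hdeg q).trans (by omega))
  · ext p
    rw [evalOn_apply, map_sum, Finset.sum_eq_single p (fun q _ hqp => ?_) (by simp)]
    · simp [hq1]
    · simp [hr0 q p p.2 (fun h => hqp (Subtype.ext h).symm)]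

lemma finrank_map_mulLeft_restrictTotalDegree {P : MvPolynomial σ K} (hP : P ≠ 0) (k : ℕ) :
    finrank K ((restrictTotalDegree σ K k).map (LinearMap.mulLeft K P)) =
      finrank K (restrictTotalDegree σ K k) :=
  (Submodule.equivMapOfInjective _ (mul_right_injective₀ hP) _).finrank_eq.symm

lemma map_mulLeft_restrictTotalDegree_le (P : MvPolynomial σ K) {k d : ℕ}
    (hk : P.totalDegree + k ≤ d) :
    (restrictTotalDegree σ K k).map (LinearMap.mulLeft K P) ≤ restrictTotalDegree σ K d := by
  rintro _ ⟨a, ha, rfl⟩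
  rw [SetLike.mem_coe, mem_restrictTotalDegree] at ha
  rw [LinearMap.mulLeft_apply, mem_restrictTotalDegree]
  exact (totalDegree_mul P a).trans (by omega)

lemma map_mulLeft_inf_map_mulLeft_restrictTotalDegree {P Q : MvPolynomial σ K}
    (hQ : Q ≠ 0) (hPQ : IsRelPrime P Q) (k : ℕ) :
    (restrictTotalDegree σ K (Q.totalDegree + k)).map (LinearMap.mulLeft K P) ⊓
        (restrictTotalDegree σ K (P.totalDegree + k)).map (LinearMap.mulLeft K Q) =
      (restrictTotalDegree σ K k).map (LinearMap.mulLeft K (P * Q)) := by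
  refine le_antisymm ?_ (le_inf ?_ ?_)
  · rintro _ ⟨⟨a, ha, rfl⟩, ⟨b, -, hab⟩⟩
    obtain ⟨c, rfl⟩ : Q ∣ a := hPQ.symm.dvd_of_dvd_mul_left ⟨b, hab.symm⟩
    rcases eq_or_ne c 0 with rfl | hc
    · simp
    rw [SetLike.mem_coe, mem_restrictTotalDegree, totalDegree_mul_of_isDomain hQ hc] at ha
    exact ⟨c, (mem_restrictTotalDegree _ _ _).mpr (by omega), by simp⟩
  · rintro _ ⟨c, hc, rfl⟩
    exact ⟨Q * c, map_mulLeft_restrictTotalDegree_le Q le_rfl ⟨c, hc, rfl⟩, by simp⟩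
  · rintro _ ⟨c, hc, rfl⟩
    exact ⟨P * c, map_mulLeft_restrictTotalDegree_le P le_rfl ⟨c, hc, rfl⟩,
      by simp [mul_left_comm]⟩

lemma two_mul_finrank_restrictTotalDegree_fin_two (d : ℕ) :
    2 * finrank K (restrictTotalDegree (Fin 2) K d) = (d + 1) * (d + 2) := by
  rw [restrictTotalDegree, finrank_eq_nat_card_basis (basisRestrictSupport K _),
    ← two_mul_card_add_le]
  congr 1
  refine Nat.card_congr <|
    Equiv.subtypeEquiv (Finsupp.equivFunOnFinite.trans (finTwoArrowEquiv ℕ)) fun n => ?_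
  simp [Finsupp.sum_fintype]

theorem card_le_totalDegree_mul_totalDegree {P Q : MvPolynomial (Fin 2) K} (hP : P ≠ 0)
    (hQ : Q ≠ 0) (hPQ : IsRelPrime P Q) (T : Finset (Fin 2 → K))
    (hT : ∀ v ∈ T, eval v P = 0 ∧ eval v Q = 0) :
    T.card ≤ P.totalDegree * Q.totalDegree := by
  set m := P.totalDegree
  set n := Q.totalDegree
  set N := T.card
  let V (k : ℕ) := restrictTotalDegree (Fin 2) K k
  let W := (V (n + N)).map (LinearMap.mulLeft K P) ⊔ (V (m + N)).map (LinearMap.mulLeft K Q)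
  have hWV : W ≤ V (m + n + N) := sup_le
    (map_mulLeft_restrictTotalDegree_le P (by omega))
    (map_mulLeft_restrictTotalDegree_le Q (by omega))
  have hWker : W ≤ LinearMap.ker (evalOn T) := by
    refine sup_le ?_ ?_ <;> rintro _ ⟨a, -, rfl⟩ <;> ext v <;> simp [(hT v v.2).1, (hT v v.2).2]
  have hdimW : finrank K W + finrank K (V N) = finrank K (V (n + N)) + finrank K (V (m + N)) := by
    have := Submodule.finrank_sup_add_finrank_inf_eq ((V (n + N)).map (LinearMap.mulLeft K P))
      ((V (m + N)).map (LinearMap.mulLeft K Q))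
    rwa [map_mulLeft_inf_map_mulLeft_restrictTotalDegree hQ hPQ,
      finrank_map_mulLeft_restrictTotalDegree hP, finrank_map_mulLeft_restrictTotalDegree hQ,
      finrank_map_mulLeft_restrictTotalDegree (mul_ne_zero hP hQ)] at this
  have hker := Submodule.finrank_map_add_finrank_le (evalOn T) hWV hWker
  rw [map_evalOn_restrictTotalDegree (by omega), finrank_top, finrank_fintype_fun_eq_card,
    Fintype.card_coe] at hker
  have h₀ := two_mul_finrank_restrictTotalDegree_fin_two (K := K) (m + n + N)
  have h₁ := two_mul_finrank_restrictTotalDegree_fin_two (K := K) (n + N)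
  have h₂ := two_mul_finrank_restrictTotalDegree_fin_two (K := K) (m + N)
  have h₃ := two_mul_finrank_restrictTotalDegree_fin_two (K := K) N
  nlinarith

theorem zeroSet_finite_and_ncard_le {P Q : MvPolynomial (Fin 2) K} (hP : P ≠ 0) (hQ : Q ≠ 0)
    (hPQ : IsRelPrime P Q) :
    {v | eval v P = 0 ∧ eval v Q = 0}.Finite ∧
      {v | eval v P = 0 ∧ eval v Q = 0}.ncard ≤ P.totalDegree * Q.totalDegree :=
  Set.finite_and_ncard_le_of_forall_finset_card_le fun T hT =>
    card_le_totalDegree_mul_totalDegree hP hQ hPQ T fun _ hv => hT hv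

end MvPolynomial

lemma Derivation.dvd_mul_sub_mul_of_dvd {R A : Type*} [CommRing R] [CommRing A] [Algebra R A]
    (D₁ D₂ : Derivation R A A) {g f h : A} (hf : g ∣ f) (hh : g ∣ h) :
    g ∣ D₁ f * D₂ h - D₁ h * D₂ f := by
  obtain ⟨a, rfl⟩ := hf
  obtain ⟨b, rfl⟩ := hh
  refine ⟨D₁ g * (a * D₂ b - b * D₂ a) + D₂ g * (b * D₁ a - a * D₁ b) +
    g * (D₁ a * D₂ b - D₁ b * D₂ a), ?_⟩
  simp only [Derivation.leibniz, smul_eq_mul]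
  ring

namespace Polynomial

section CommRing

variable {R : Type*} [CommRing R]

noncomputable def divDiff (p : R[X]) : MvPolynomial (Fin 2) R :=
  p.sum fun k a => MvPolynomial.C a *
    ∑ i ∈ Finset.range k, MvPolynomial.X 0 ^ i * MvPolynomial.X 1 ^ (k - 1 - i)

lemma divDiff_mul_X_sub_X (p : R[X]) :
    p.divDiff * (MvPolynomial.X 0 - MvPolynomial.X 1) =
      aeval (MvPolynomial.X 0) p - aeval (MvPolynomial.X 1) p := by
  rw [divDiff, aeval_def, aeval_def, eval₂_eq_sum, eval₂_eq_sum, Polynomial.sum, Polynomial.sum,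
    Polynomial.sum, Finset.sum_mul, ← Finset.sum_sub_distrib]
  refine Finset.sum_congr rfl fun k _ => ?_
  rw [mul_assoc, geom_sum₂_mul, mul_sub, MvPolynomial.algebraMap_eq]

lemma totalDegree_divDiff_le [Nontrivial R] (p : R[X]) :
    p.divDiff.totalDegree ≤ p.natDegree - 1 := by
  refine (MvPolynomial.totalDegree_finsetSum _ _).trans (Finset.sup_le fun k hk => ?_)
  have hk' : k ≤ p.natDegree := le_natDegree_of_mem_supp k hk
  refine (MvPolynomial.totalDegree_mul _ _).trans ?_
  rw [MvPolynomial.totalDegree_C, zero_add]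
  refine (MvPolynomial.totalDegree_finsetSum _ _).trans (Finset.sup_le fun i hi => ?_)
  rw [Finset.mem_range] at hi
  refine (MvPolynomial.totalDegree_mul _ _).trans ?_
  rw [MvPolynomial.totalDegree_X_pow, MvPolynomial.totalDegree_X_pow]
  omega

lemma eval_aeval_X (p : R[X]) (v : Fin 2 → R) (i : Fin 2) :
    MvPolynomial.eval v (aeval (MvPolynomial.X i) p) = p.eval (v i) := by
  have := aeval_algHom_apply (MvPolynomial.aeval v) (MvPolynomial.X i) p
  simpa [MvPolynomial.coe_aeval_eq_eval] using this.symm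

noncomputable def tangentDet (x y : R[X]) : MvPolynomial (Fin 2) R :=
  aeval (MvPolynomial.X 0) (derivative x) * aeval (MvPolynomial.X 1) (derivative y) -
    aeval (MvPolynomial.X 1) (derivative x) * aeval (MvPolynomial.X 0) (derivative y)

lemma eval_tangentDet (x y : R[X]) (v : Fin 2 → R) :
    MvPolynomial.eval v (tangentDet x y) =
      (derivative x).eval (v 0) * (derivative y).eval (v 1) -
        (derivative x).eval (v 1) * (derivative y).eval (v 0) := by
  simp [tangentDet, eval_aeval_X]

lemma tangentDet_eq (x y : R[X]) :
    tangentDet x y =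
      MvPolynomial.pderiv 0 (y.divDiff * (MvPolynomial.X 0 - MvPolynomial.X 1)) *
        MvPolynomial.pderiv 1 (x.divDiff * (MvPolynomial.X 0 - MvPolynomial.X 1)) -
      MvPolynomial.pderiv 0 (x.divDiff * (MvPolynomial.X 0 - MvPolynomial.X 1)) *
        MvPolynomial.pderiv 1 (y.divDiff * (MvPolynomial.X 0 - MvPolynomial.X 1)) := by
  simp only [divDiff_mul_X_sub_X, map_sub, Derivation.comp_aeval_eq, MvPolynomial.pderiv_X]
  simp [tangentDet]
  ring

lemma dvd_tangentDet {x y : R[X]} {g : MvPolynomial (Fin 2) R} (hx : g ∣ x.divDiff)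
    (hy : g ∣ y.divDiff) : g ∣ tangentDet x y := by
  rw [tangentDet_eq]
  exact Derivation.dvd_mul_sub_mul_of_dvd _ _ (hy.mul_right _) (hx.mul_right _)

end CommRing

variable {K : Type*} [Field K]

lemma eval_divDiff_eq_zero {p : K[X]} {v : Fin 2 → K} (hv : v 0 ≠ v 1)
    (hp : p.eval (v 0) = p.eval (v 1)) : MvPolynomial.eval v p.divDiff = 0 := by
  have := congrArg (MvPolynomial.eval v) (divDiff_mul_X_sub_X p)
  rw [map_mul, map_sub, map_sub, eval_aeval_X, eval_aeval_X, hp, sub_self] at this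
  simpa [sub_ne_zero.mpr hv] using this

def doublePointParams (x y : K[X]) : Set (Fin 2 → K) :=
  {v | v 0 ≠ v 1 ∧ x.eval (v 0) = x.eval (v 1) ∧ y.eval (v 0) = y.eval (v 1)}

lemma eval_eq_zero_of_mul_eq_divDiff {p : K[X]} {G P : MvPolynomial (Fin 2) K}
    (hGP : G * P = p.divDiff) {v : Fin 2 → K} (hv : v 0 ≠ v 1)
    (hp : p.eval (v 0) = p.eval (v 1)) (hG : MvPolynomial.eval v G ≠ 0) :
    MvPolynomial.eval v P = 0 := by
  have := eval_divDiff_eq_zero hv hp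
  rw [← hGP, map_mul] at this
  exact (mul_eq_zero.mp this).resolve_left hG

lemma totalDegree_le_of_mul_eq_divDiff {p : K[X]} {G P : MvPolynomial (Fin 2) K}
    (hGP : G * P = p.divDiff) (hp : p.divDiff ≠ 0) : P.totalDegree ≤ p.natDegree - 1 := by
  have := p.totalDegree_divDiff_le
  rw [← hGP, MvPolynomial.totalDegree_mul_of_isDomain (left_ne_zero_of_mul (hGP ▸ hp))
    (right_ne_zero_of_mul (hGP ▸ hp))] at this
  omega

theorem doublePointParams_finite_and_ncard_le {x y : K[X]}
    (htrans : ∀ r s : K, r ≠ s → x.eval r = x.eval s → y.eval r = y.eval s →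
      x.derivative.eval r * y.derivative.eval s
        - x.derivative.eval s * y.derivative.eval r ≠ 0) :
    (doublePointParams x y).Finite ∧
      (doublePointParams x y).ncard ≤ (x.natDegree - 1) * (y.natDegree - 1) := by
  rcases (doublePointParams x y).eq_empty_or_nonempty with hS | ⟨v₀, hv₀⟩
  · simp [hS]
  have hJ : ∀ v ∈ doublePointParams x y, MvPolynomial.eval v (tangentDet x y) ≠ 0 :=
    fun v ⟨hv, hxv, hyv⟩ => by rw [eval_tangentDet]; exact htrans _ _ hv hxv hyv
  have hJ₀ : tangentDet x y ≠ 0 := fun h => hJ v₀ hv₀ (by rw [h, map_zero])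
  have hx : x.divDiff ≠ 0 := fun h => hJ₀ (by simp [tangentDet_eq, h])
  have hy : y.divDiff ≠ 0 := fun h => hJ₀ (by simp [tangentDet_eq, h])
  obtain ⟨P, Q, G, hPQ, hGP, hGQ⟩ :=
    UniqueFactorizationMonoid.exists_reduced_factors _ hx y.divDiff
  obtain ⟨c, hc⟩ := dvd_tangentDet ⟨P, hGP.symm⟩ ⟨Q, hGQ.symm⟩
  have hsub : doublePointParams x y ⊆
      {v | MvPolynomial.eval v P = 0 ∧ MvPolynomial.eval v Q = 0} := by
    rintro v hv
    have hG : MvPolynomial.eval v G ≠ 0 := fun h => hJ v hv (by rw [hc, map_mul, h, zero_mul])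
    exact ⟨eval_eq_zero_of_mul_eq_divDiff hGP hv.1 hv.2.1 hG,
      eval_eq_zero_of_mul_eq_divDiff hGQ hv.1 hv.2.2 hG⟩
  obtain ⟨hfin, hcard⟩ := MvPolynomial.zeroSet_finite_and_ncard_le
    (right_ne_zero_of_mul (hGP ▸ hx)) (right_ne_zero_of_mul (hGQ ▸ hy)) hPQ
  refine ⟨hfin.subset hsub, (Set.ncard_le_ncard hsub hfin).trans (hcard.trans ?_)⟩
  exact Nat.mul_le_mul (totalDegree_le_of_mul_eq_divDiff hGP hx)
    (totalDegree_le_of_mul_eq_divDiff hGQ hy)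

end Polynomial

open Polynomial

theorem stmt_8_general (x y : Polynomial ℝ)
    (htrans : ∀ r s : ℝ, r ≠ s → x.eval r = x.eval s → y.eval r = y.eval s →
      x.derivative.eval r * y.derivative.eval s
        - x.derivative.eval s * y.derivative.eval r ≠ 0) :
    let D : Set (ℝ × ℝ) :=
      {p | ∃ r s : ℝ, r ≠ s ∧ (x.eval r, y.eval r) = p ∧ (x.eval s, y.eval s) = p}
    D.Finite ∧ 2 * D.ncard ≤ (x.natDegree - 1) * (y.natDegree - 1) := by
  intro D
  obtain ⟨hfin, hcard⟩ := doublePointParams_finite_and_ncard_le htrans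
  have hD : D = (fun v => (x.eval (v 0), y.eval (v 0))) '' doublePointParams x y := by
    ext p
    constructor
    · rintro ⟨r, s, hrs, rfl, hs⟩
      obtain ⟨hx, hy⟩ := Prod.mk.inj hs
      exact ⟨![r, s], ⟨hrs, hx.symm, hy.symm⟩, rfl⟩
    · rintro ⟨v, ⟨hv, hx, hy⟩, rfl⟩
      exact ⟨v 0, v 1, hv, rfl, by simp [hx, hy]⟩
  refine hD ▸ ⟨hfin.image _, le_trans ?_ hcard⟩
  refine Set.two_mul_ncard_image_le hfin fun v ⟨hv, hx, hy⟩ => ?_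
  exact ⟨![v 1, v 0], ⟨hv.symm, hx.symm, hy.symm⟩, fun h => hv (congrFun h 1), by simp [hx, hy]⟩

theorem stmt_8 (x y : Polynomial ℝ)
    (hreg : ∀ t : ℝ, ¬(x.derivative.eval t = 0 ∧ y.derivative.eval t = 0))
    (hdouble : ∀ r s u : ℝ, r ≠ s → s ≠ u → r ≠ u →
      ¬(x.eval r = x.eval s ∧ x.eval s = x.eval u ∧
        y.eval r = y.eval s ∧ y.eval s = y.eval u))
    (htrans : ∀ r s : ℝ, r ≠ s → x.eval r = x.eval s → y.eval r = y.eval s →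
      x.derivative.eval r * y.derivative.eval s
        - x.derivative.eval s * y.derivative.eval r ≠ 0) :
    let D : Set (ℝ × ℝ) :=
      {p | ∃ r s : ℝ, r ≠ s ∧ (x.eval r, y.eval r) = p ∧ (x.eval s, y.eval s) = p}
    D.Finite ∧ 2 * D.ncard ≤ (x.natDegree - 1) * (y.natDegree - 1) :=
  stmt_8_general x y htrans
end

section
/- The Shastri map κ(t) = (t³ - 3t, t⁴ - 4t², t⁵ - 10t) is a polynomial knot: it is injective on ℝ and its derivative (3t² - 3, 4t³ - 8t, 5t⁴ - 10) never vanishes. -/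
theorem stmt_14 :
    let κ : ℝ → ℝ × ℝ × ℝ := fun t => (t ^ 3 - 3 * t, t ^ 4 - 4 * t ^ 2, t ^ 5 - 10 * t)
    Function.Injective κ ∧
    ∀ t : ℝ, ¬(3 * t ^ 2 - 3 = 0 ∧ 4 * t ^ 3 - 8 * t = 0 ∧ 5 * t ^ 4 - 10 = 0) := by
  intro κ
  constructor
  · intro a b h
    have h1 : a ^ 3 - 3 * a = b ^ 3 - 3 * b := congrArg Prod.fst h
    have h2 : a ^ 4 - 4 * a ^ 2 = b ^ 4 - 4 * b ^ 2 := congrArg Prod.fst (congrArg Prod.snd h)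
    have h3 : a ^ 5 - 10 * a = b ^ 5 - 10 * b := congrArg Prod.snd (congrArg Prod.snd h)
    have key : ∀ t : ℝ, (t ^ 4 - 4 * t ^ 2) * (t ^ 5 - 10 * t) - (t ^ 3 - 3 * t) ^ 3
        - 5 * (t ^ 3 - 3 * t) * (t ^ 4 - 4 * t ^ 2) + 2 * (t ^ 5 - 10 * t)
        - 7 * (t ^ 3 - 3 * t) = t := by intro t; ring
    calc a = (a ^ 4 - 4 * a ^ 2) * (a ^ 5 - 10 * a) - (a ^ 3 - 3 * a) ^ 3
        - 5 * (a ^ 3 - 3 * a) * (a ^ 4 - 4 * a ^ 2) + 2 * (a ^ 5 - 10 * a)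
        - 7 * (a ^ 3 - 3 * a) := (key a).symm
      _ = (b ^ 4 - 4 * b ^ 2) * (b ^ 5 - 10 * b) - (b ^ 3 - 3 * b) ^ 3
        - 5 * (b ^ 3 - 3 * b) * (b ^ 4 - 4 * b ^ 2) + 2 * (b ^ 5 - 10 * b)
        - 7 * (b ^ 3 - 3 * b) := by rw [h1, h2, h3]
      _ = b := key b
  · rintro t ⟨h1, _, h3⟩
    have : t ^ 2 = 1 := by nlinarith
    nlinarith [this]
end

section
/- Let α : ℂ → ℂⁿ be a polynomial map with components α₁, ..., αₙ, and suppose the induced ring homomorphism α̂ : ℂ[x₁,...,xₙ] → ℂ[t], defined by α̂(xᵢ) = αᵢ(t), is surjective. Then α is injective and α'(t) ≠ 0 for all t ∈ ℂ. -/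
open Polynomial

open TrivSqZeroExt in
lemma aeval_dual_aux (t : ℂ) (q : Polynomial ℂ) :
    Polynomial.aeval (inl t + DualNumber.eps : DualNumber ℂ) q
      = inl (q.eval t) + inr (q.derivative.eval t) := by
  induction q using Polynomial.induction_on with
  | C a => simp [algebraMap_eq_inl]
  | add p q hp hq =>
    simp only [map_add, hp, hq, eval_add, derivative_add, inl_add, inr_add]
    abel
  | monomial n a ih =>
    have h : (C a : ℂ[X]) * X ^ (n + 1) = (C a * X ^ n) * X := by ring
    rw [h, map_mul, ih, Polynomial.aeval_X]
    refine TrivSqZeroExt.ext ?_ ?_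
    · simp only [fst_mul, fst_add, fst_inl, fst_inr, DualNumber.fst_eps, add_zero,
        eval_mul, eval_C, eval_pow, eval_X, derivative_mul, derivative_C]
    · simp only [snd_mul, snd_add, snd_inl, snd_inr, DualNumber.snd_eps, fst_mul,
        fst_add, fst_inl, fst_inr, DualNumber.fst_eps, add_zero, zero_add, smul_eq_mul,
        eval_mul, eval_C, eval_pow, eval_X, derivative_mul, derivative_C, zero_mul,
        eval_add, derivative_X_pow, derivative_X, eval_one, mul_one, eval_natCast,
        MulOpposite.smul_eq_mul_unop, MulOpposite.unop_op]
      cases n with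
      | zero => simp
      | succ m =>
        push_cast
        simp [pow_succ]
        ring

theorem stmt_15 (n : ℕ) (α : Fin n → Polynomial ℂ)
    (hsurj : Function.Surjective
      (MvPolynomial.aeval α : MvPolynomial (Fin n) ℂ →ₐ[ℂ] Polynomial ℂ)) :
    Function.Injective (fun t : ℂ => fun i => (α i).eval t) ∧
    ∀ t : ℂ, (fun i => (α i).derivative.eval t) ≠ (0 : Fin n → ℂ) := by
  obtain ⟨p, hp⟩ := hsurj X
  constructor
  · intro s t h
    have key : ∀ u : ℂ, MvPolynomial.aeval (fun i => (α i).eval u) p = u := by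
      intro u
      have := MvPolynomial.comp_aeval_apply (f := α) (Polynomial.aeval u : ℂ[X] →ₐ[ℂ] ℂ) p
      rw [hp] at this
      simpa using this.symm
    have hs := key s
    have ht := key t
    rw [show (fun i => (α i).eval s) = (fun i => (α i).eval t) from h] at hs
    rw [hs] at ht
    exact ht
  · intro t ht
    set x : DualNumber ℂ := TrivSqZeroExt.inl t + DualNumber.eps with hx
    have h1 : Polynomial.aeval x (MvPolynomial.aeval α p)
        = MvPolynomial.aeval (fun i => Polynomial.aeval x (α i)) p :=
      MvPolynomial.comp_aeval_apply (f := α) (Polynomial.aeval x) p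
    have h2 : ∀ i, Polynomial.aeval x (α i)
        = TrivSqZeroExt.inl ((α i).eval t) := by
      intro i
      rw [hx, aeval_dual_aux]
      have : (α i).derivative.eval t = 0 := congrFun ht i
      simp [this]
    have h3 : MvPolynomial.aeval (fun i => Polynomial.aeval x (α i)) p
        = TrivSqZeroExt.inl (MvPolynomial.aeval (fun i => (α i).eval t) p) := by
      have h4 := MvPolynomial.comp_aeval_apply (f := fun i => (α i).eval t)
        (Algebra.ofId ℂ (DualNumber ℂ)) p
      have h6 : (fun i => Polynomial.aeval x (α i))
          = fun i => Algebra.ofId ℂ (DualNumber ℂ) ((α i).eval t) :=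
        funext fun i => by
          rw [h2 i]; simp [Algebra.ofId_apply, TrivSqZeroExt.algebraMap_eq_inl]
      rw [h6, ← h4]
      simp only [Algebra.ofId_apply]
      exact congrFun (TrivSqZeroExt.algebraMap_eq_inl ℂ ℂ) _
    rw [hp, Polynomial.aeval_X, h3] at h1
    have h5 := congrArg TrivSqZeroExt.snd h1
    simp [hx] at h5
end

section
/- The complexified Shastri trefoil α : ℂ → ℂ³, α(t) = (t³ - 3t, t⁴ - 4t², t⁵ - 10t), satisfies p(α(t)) = t for p(x,y,z) = yz - x³ - 5xy + 2z - 7x; hence α is an injective holomorphic embedding with nowhere-vanishing derivative. -/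
theorem stmt_17 :
    let α : ℂ → ℂ × ℂ × ℂ := fun t => (t ^ 3 - 3 * t, t ^ 4 - 4 * t ^ 2, t ^ 5 - 10 * t)
    (∀ t : ℂ, (t ^ 4 - 4 * t ^ 2) * (t ^ 5 - 10 * t) - (t ^ 3 - 3 * t) ^ 3
        - 5 * (t ^ 3 - 3 * t) * (t ^ 4 - 4 * t ^ 2) + 2 * (t ^ 5 - 10 * t)
        - 7 * (t ^ 3 - 3 * t) = t) ∧
    Function.Injective α ∧
    ∀ t : ℂ, ¬(3 * t ^ 2 - 3 = 0 ∧ 4 * t ^ 3 - 8 * t = 0 ∧ 5 * t ^ 4 - 10 = 0) := by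
  intro α
  have hp : ∀ t : ℂ, (t ^ 4 - 4 * t ^ 2) * (t ^ 5 - 10 * t) - (t ^ 3 - 3 * t) ^ 3
        - 5 * (t ^ 3 - 3 * t) * (t ^ 4 - 4 * t ^ 2) + 2 * (t ^ 5 - 10 * t)
        - 7 * (t ^ 3 - 3 * t) = t := fun t => by ring
  refine ⟨hp, ?_, ?_⟩
  · intro a b hab
    simp only [α, Prod.mk.injEq] at hab
    obtain ⟨h1, h2, h3⟩ := hab
    calc a = (a ^ 4 - 4 * a ^ 2) * (a ^ 5 - 10 * a) - (a ^ 3 - 3 * a) ^ 3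
        - 5 * (a ^ 3 - 3 * a) * (a ^ 4 - 4 * a ^ 2) + 2 * (a ^ 5 - 10 * a)
        - 7 * (a ^ 3 - 3 * a) := (hp a).symm
      _ = (b ^ 4 - 4 * b ^ 2) * (b ^ 5 - 10 * b) - (b ^ 3 - 3 * b) ^ 3
        - 5 * (b ^ 3 - 3 * b) * (b ^ 4 - 4 * b ^ 2) + 2 * (b ^ 5 - 10 * b)
        - 7 * (b ^ 3 - 3 * b) := by rw [h1, h2, h3]
      _ = b := hp b
  · rintro t ⟨h1, _, h3⟩
    have ht2 : t ^ 2 = 1 := by linear_combination h1 / 3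
    have : (5 : ℂ) = 10 := by linear_combination h3 - 5 * (t ^ 2 + 1) * ht2
    norm_num at this
end

section
/- For every polynomial knot κ in the space V^n_{d₁,...,dₙ} of knots of the form xᵢ(t) = t^{dᵢ} + aⁱ_{dᵢ-1}t^{dᵢ-1} + ··· + aⁱ₁t, and every u > 0, the map κ_u(t) whose i-th component is t^{dᵢ} + aⁱ_{dᵢ-1}·u·t^{dᵢ-1} + ··· + aⁱ₁·u^{dᵢ-1}·t satisfies κ_u(t) = (u^{d₁}x₁(t/u), ..., u^{dₙ}xₙ(t/u)); consequently κ_u is injective with nowhere-vanishing derivative whenever κ is, and κ₀(t) = (t^{d₁},...,t^{dₙ}). -/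
/-!
Substituting `t / u` into `xᵢ` and multiplying by `u ^ dᵢ` turns the coefficient `a j` of `t ^ j`
into `a j * u ^ (dᵢ - j)`, so `κ_u` is `κ` precomposed with `t ↦ t / u` and postcomposed with the
coordinatewise scaling by `u ^ dᵢ`. Both are invertible for `u ≠ 0`, so injectivity transfers, and
by the chain rule the derivative only picks up the nonzero factor `u ^ dᵢ / u`. At `u = 0` every
term but the leading one carries a positive power of `0`.
-/

open Finset

theorem sum_mul_pow_sub_mul_pow_eq_pow_mul {K : Type*} [Field K] (c : ℕ → K) (m : ℕ) {u : K}
    (hu : u ≠ 0) (t : K) :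
    ∑ j ∈ range (m + 1), c j * u ^ (m - j) * t ^ j =
      u ^ m * ∑ j ∈ range (m + 1), c j * (t / u) ^ j := by
  rw [mul_sum]
  refine sum_congr rfl fun j hj => ?_
  rw [pow_sub₀ u hu (Nat.lt_succ_iff.mp (mem_range.mp hj)), div_pow]
  field_simp

theorem sum_mul_zero_pow_sub_mul_pow {R : Type*} [CommSemiring R] (c : ℕ → R) (m : ℕ) (t : R) :
    ∑ j ∈ range (m + 1), c j * 0 ^ (m - j) * t ^ j = c m * t ^ m := by
  have hlower : ∑ j ∈ range m, c j * 0 ^ (m - j) * t ^ j = 0 := sum_eq_zero fun j hj => by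
    rw [zero_pow (Nat.sub_ne_zero_of_lt (mem_range.mp hj)), mul_zero, zero_mul]
  rw [sum_range_succ, hlower, zero_add, Nat.sub_self, pow_zero, mul_one]

theorem Function.Injective.const_mul_comp_div_const {K ι : Type*} [Field K] {f : K → ι → K}
    (hf : Injective f) {c : ι → K} (hc : ∀ i, c i ≠ 0) {u : K} (hu : u ≠ 0) :
    Injective fun t i => c i * f (t / u) i := by
  have hscale : Injective fun (v : ι → K) i => c i * v i := fun v w h =>
    funext fun i => mul_left_cancel₀ (hc i) (congrFun h i)
  have hdiv : Injective fun t : K => t / u := fun s t h => by simpa [hu] using h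
  exact hscale.comp (hf.comp hdiv)

theorem deriv_const_mul_comp_div_const {𝕜 : Type*} [NontriviallyNormedField 𝕜] (f : 𝕜 → 𝕜)
    (c u t : 𝕜) :
    deriv (fun s => c * f (s / u)) t = c * u⁻¹ * deriv f (t / u) := by
  simp_rw [deriv_const_mul_field, div_eq_inv_mul]
  rw [deriv_comp_mul_left u⁻¹ f t, smul_eq_mul, mul_assoc]

theorem stmt_18_general (n : ℕ) (d : Fin n → ℕ)
    (a : Fin n → ℕ → ℝ)
    (halead : ∀ i, a i (d i) = 1) :
    let x : Fin n → ℝ → ℝ := fun i t => ∑ j ∈ Finset.range (d i + 1), a i j * t ^ j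
    let κ : ℝ → ℝ → (Fin n → ℝ) :=
      fun u t => fun i => ∑ j ∈ Finset.range (d i + 1), a i j * u ^ (d i - j) * t ^ j
    (∀ u : ℝ, 0 < u → ∀ t i, κ u t i = u ^ d i * x i (t / u)) ∧
    (∀ t i, κ 0 t i = t ^ d i) ∧
    (∀ u : ℝ, 0 < u →
      (Function.Injective (fun t => fun i => x i t) → Function.Injective (κ u)) ∧
      ((∀ t, ∃ i, deriv (x i) t ≠ 0) →
        ∀ t, ∃ i, deriv (fun t => κ u t i) t ≠ 0)) := by
  intro x κ
  have scaling : ∀ u : ℝ, 0 < u → ∀ t i, κ u t i = u ^ d i * x i (t / u) := fun u hu t i =>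
    sum_mul_pow_sub_mul_pow_eq_pow_mul (a i) (d i) hu.ne' t
  refine ⟨scaling, fun t i => ?_, fun u hu => ⟨fun hinj => ?_, fun hder t => ?_⟩⟩
  · simp only [κ, sum_mul_zero_pow_sub_mul_pow, halead, one_mul]
  · have hκ : κ u = fun t i => u ^ d i * x i (t / u) := funext fun t => funext (scaling u hu t)
    rw [hκ]
    exact hinj.const_mul_comp_div_const (fun i => pow_ne_zero _ hu.ne') hu.ne'
  · obtain ⟨i, hi⟩ := hder (t / u)
    refine ⟨i, ?_⟩
    simp_rw [scaling u hu, deriv_const_mul_comp_div_const]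
    exact mul_ne_zero (mul_ne_zero (pow_ne_zero _ hu.ne') (inv_ne_zero hu.ne')) hi

theorem stmt_18 (n : ℕ) (d : Fin n → ℕ) (hd : ∀ i, 1 ≤ d i)
    (a : Fin n → ℕ → ℝ)
    (ha0 : ∀ i, a i 0 = 0) (halead : ∀ i, a i (d i) = 1) :
    let x : Fin n → ℝ → ℝ := fun i t => ∑ j ∈ Finset.range (d i + 1), a i j * t ^ j
    let κ : ℝ → ℝ → (Fin n → ℝ) :=
      fun u t => fun i => ∑ j ∈ Finset.range (d i + 1), a i j * u ^ (d i - j) * t ^ j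
    (∀ u : ℝ, 0 < u → ∀ t i, κ u t i = u ^ d i * x i (t / u)) ∧
    (∀ t i, κ 0 t i = t ^ d i) ∧
    (∀ u : ℝ, 0 < u →
      (Function.Injective (fun t => fun i => x i t) → Function.Injective (κ u)) ∧
      ((∀ t, ∃ i, deriv (x i) t ≠ 0) →
        ∀ t, ∃ i, deriv (fun t => κ u t i) t ≠ 0)) :=
  stmt_18_general n d a halead
end
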